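/- Monotonicity of the generalized Gauss–Bonnet Hawking mass (Proposition 3.2). Let n ≥ 3, λ ≥ 0, α > 0, α̃ = (n−2)(n−3)·α, r₊ > 0, and let V, k_I, k_S be spherically symmetric radial data on [r₊,∞) satisfying the radial Gauss–Bonnet constraints with matter energy density μ̃ and radial momentum density J̃_ν. Assume the dominant energy condition μ̃(r) ≥ |J̃_ν(r)| for all r > r₊ and the outermost condition H(r) > |k_S(r)| for all r > r₊. Then m_GB is non-decreasing on [r₊,∞): for all r₊ ≤ r₁ ≤ r₂, m_GB(r₁) ≤ m_GB(r₂) (assuming m_GB is continuous at r₊). -/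

import Mathlib

/-!
Differentiating `m_GB` and substituting the two radial constraints gives the exact identity
`m_GB' = r^{n-1}/(2(n-1)) · 16π (μ̃ - (k_S/H) J̃_ν)`: the Gauss–Bonnet corrections `μ̃⁽ᵅ⁾`,
`J̃⁽ᵅ⁾_ν` account precisely for the derivative of `2 α̃ m_H²/r^n`, and `λ r^n/2` for the
cosmological term. The outermost condition gives `|k_S/H| < 1`, so the dominant energy
condition makes `m_GB' ≥ 0` for `r > r₊`; continuity at `r₊` and the mean value theorem
finish the proof.
-/

open Real Filter

/-- Mean curvature of the coordinate sphere of radius `r`: `H = (n-1)√(V r)/r`. -/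
noncomputable def sphMeanCurv (n : ℕ) (V : ℝ → ℝ) (r : ℝ) : ℝ :=
  ((n : ℝ) - 1) * Real.sqrt (V r) / r

/-- Scalar curvature of `g = V⁻¹dr² + r²·(round metric)`:
`R = (n-1) r^{1-n} (d/dr)[r^{n-2}(1 - V)]`. -/
noncomputable def sphScalCurv (n : ℕ) (V : ℝ → ℝ) (r : ℝ) : ℝ :=
  ((n : ℝ) - 1) / r ^ (n - 1) * deriv (fun ρ => ρ ^ (n - 2) * (1 - V ρ)) r

/-- The Hawking mass `m_H(r) = (r^{n-2}/2)[1 - V + r² k_S²/(n-1)²]`. -/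
noncomputable def hawkingMass (n : ℕ) (V kS : ℝ → ℝ) (r : ℝ) : ℝ :=
  r ^ (n - 2) / 2 * (1 - V r + r ^ 2 * kS r ^ 2 / ((n : ℝ) - 1) ^ 2)

/-- The generalized Gauss–Bonnet Hawking mass
`m_GB(r) = m_H(r) + λ r^n/2 + 2 α̃ m_H(r)²/r^n`. -/
noncomputable def gbHawkingMass (n : ℕ) (lam ta : ℝ) (V kS : ℝ → ℝ) (r : ℝ) : ℝ :=
  hawkingMass n V kS r + lam * r ^ n / 2 + 2 * ta * (hawkingMass n V kS r) ^ 2 / r ^ n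

/-- `N₁ = H·[k_I - k_S/(n-1) - r k_S'/(n-1)]`. -/
noncomputable def gbN1 (n : ℕ) (V kI kS : ℝ → ℝ) (r : ℝ) : ℝ :=
  sphMeanCurv n V r *
    (kI r - kS r / ((n : ℝ) - 1) - r * deriv kS r / ((n : ℝ) - 1))

/-- `𝓜 = R + (k_I + k_S)² - k_I² - k_S²/(n-1)`. -/
noncomputable def gbM (n : ℕ) (V kI kS : ℝ → ℝ) (r : ℝ) : ℝ :=
  sphScalCurv n V r + (kI r + kS r) ^ 2 - kI r ^ 2 - kS r ^ 2 / ((n : ℝ) - 1)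

/-- `μ̃⁽ᵅ⁾ = (n-1)(n-2)(n-3)·(8 m_H/r^n)·[m_H'/r^{n-1} - n m_H/(2 r^n) + (k_S/(n-1)) N₁/H]`. -/
noncomputable def gbMuAlpha (n : ℕ) (V kI kS : ℝ → ℝ) (r : ℝ) : ℝ :=
  ((n : ℝ) - 1) * ((n : ℝ) - 2) * ((n : ℝ) - 3) * (8 * hawkingMass n V kS r / r ^ n) *
    (deriv (hawkingMass n V kS) r / r ^ (n - 1)
      - (n : ℝ) * hawkingMass n V kS r / (2 * r ^ n)
      + kS r / ((n : ℝ) - 1) * gbN1 n V kI kS r / sphMeanCurv n V r)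

/-- `J̃⁽ᵅ⁾_ν = 2 N₁ (n-2)(n-3) m_H/r^n`. -/
noncomputable def gbJAlpha (n : ℕ) (V kI kS : ℝ → ℝ) (r : ℝ) : ℝ :=
  2 * gbN1 n V kI kS r * ((n : ℝ) - 2) * ((n : ℝ) - 3) * hawkingMass n V kS r / r ^ n

lemma monotoneOn_Ici_of_deriv_nonneg {f : ℝ → ℝ} {a : ℝ}
    (hfa : ContinuousWithinAt f (Set.Ici a) a) (hf : ∀ x, a < x → DifferentiableAt ℝ f x)
    (hf' : ∀ x, a < x → 0 ≤ deriv f x) : MonotoneOn f (Set.Ici a) := by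
  refine monotoneOn_of_deriv_nonneg (convex_Ici a) ?_ ?_ ?_
  · intro x hx
    rcases (Set.mem_Ici.mp hx).eq_or_lt with rfl | hax
    · exact hfa
    · exact (hf x hax).continuousAt.continuousWithinAt
  · rw [interior_Ici]
    exact fun x hx => (hf x hx).differentiableWithinAt
  · rw [interior_Ici]
    exact hf'

lemma div_mul_le_of_abs_le {k H J μ : ℝ} (hk : |k| ≤ H) (hJ : |J| ≤ μ) :
    k / H * J ≤ μ := by
  have hkH : |k / H| ≤ 1 := by
    rw [abs_div]
    exact div_le_one_of_le₀ (hk.trans (le_abs_self H)) (abs_nonneg H)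
  calc k / H * J ≤ |k / H| * |J| := (le_abs_self _).trans (abs_mul _ _).le
    _ ≤ 1 * μ := mul_le_mul hkH hJ (abs_nonneg _) zero_le_one
    _ = μ := one_mul μ

lemma pos_of_sphMeanCurv_pos {n : ℕ} (hn : 1 ≤ n) {V : ℝ → ℝ} {r : ℝ}
    (h : 0 < sphMeanCurv n V r) : 0 < r ∧ 0 < V r := by
  have hn' : (0 : ℝ) ≤ (n : ℝ) - 1 := by
    have : (1 : ℝ) ≤ n := by exact_mod_cast hn
    linarith
  have hr : 0 < r := by
    by_contra! hr
    exact h.not_ge (div_nonpos_of_nonneg_of_nonpos (by positivity) hr)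
  have hnum : 0 < ((n : ℝ) - 1) * Real.sqrt (V r) := (div_pos_iff_of_pos_right hr).mp h
  exact ⟨hr, Real.sqrt_pos.mp (pos_of_mul_pos_right hnum hn')⟩

lemma differentiableAt_gbHawkingMass (n : ℕ) (lam ta : ℝ) {V kS : ℝ → ℝ} {r : ℝ}
    (hr : r ≠ 0) (hV : DifferentiableAt ℝ V r) (hkS : DifferentiableAt ℝ kS r) :
    DifferentiableAt ℝ (gbHawkingMass n lam ta V kS) r := by
  have hm : DifferentiableAt ℝ (hawkingMass n V kS) r := by
    unfold hawkingMass
    fun_prop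
  unfold gbHawkingMass
  fun_prop (disch := exact pow_ne_zero _ hr)

lemma deriv_gbHawkingMass {n : ℕ} (hn : 2 ≤ n) (lam α : ℝ) {V kI kS : ℝ → ℝ} {r : ℝ}
    (hr : r ≠ 0) (hVr : 0 < V r) (hV : DifferentiableAt ℝ V r)
    (hkS : DifferentiableAt ℝ kS r) :
    deriv (gbHawkingMass n lam (((n : ℝ) - 2) * ((n : ℝ) - 3) * α) V kS) r =
      r ^ (n - 1) / (2 * ((n : ℝ) - 1)) *
        ((gbM n V kI kS r + (n : ℝ) * ((n : ℝ) - 1) * lam + α * gbMuAlpha n V kI kS r)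
          - 2 * kS r / sphMeanCurv n V r *
            (gbN1 n V kI kS r + 2 * α * gbJAlpha n V kI kS r)) := by
  obtain ⟨p, rfl⟩ : ∃ p, n = p + 2 := ⟨n - 2, by omega⟩
  have hs : Real.sqrt (V r) ≠ 0 := (Real.sqrt_pos.mpr hVr).ne'
  have hn1 : (p : ℝ) + 2 - 1 ≠ 0 := by ring_nf; positivity
  -- `hasDerivAt_pow` produces the truncated exponent `p - 1`, which `ring` cannot handle.
  have hpow : (p : ℝ) * r ^ (p - 1) = p * r ^ p / r := by
    rcases p with _ | p
    · simp
    · field_simp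
      simp [pow_succ]
  have hm : HasDerivAt (hawkingMass (p + 2) V kS) _ r :=
    ((hasDerivAt_pow p r).div_const 2).mul
      (((hasDerivAt_const r (1 : ℝ)).sub hV.hasDerivAt).add
        (((hasDerivAt_pow 2 r).mul (hkS.hasDerivAt.pow 2)).div_const _))
  set ta : ℝ := (((p + 2 : ℕ) : ℝ) - 2) * (((p + 2 : ℕ) : ℝ) - 3) * α
  have hg : HasDerivAt (gbHawkingMass (p + 2) lam ta V kS) _ r :=
    (hm.add (((hasDerivAt_pow (p + 2) r).const_mul lam).div_const 2)).add
      (((hm.pow 2).const_mul (2 * ta)).div (hasDerivAt_pow (p + 2) r) (pow_ne_zero _ hr))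
  have hR : deriv (fun ρ => ρ ^ p * (1 - V ρ)) r = _ :=
    ((hasDerivAt_pow p r).mul ((hasDerivAt_const r (1 : ℝ)).sub hV.hasDerivAt)).deriv
  rw [hg.deriv]
  simp only [gbM, gbMuAlpha, gbJAlpha, gbN1, sphScalCurv, sphMeanCurv, hm.deriv, hR,
    Nat.add_sub_cancel, hpow, ta, Pi.sub_apply, Pi.pow_apply]
  push_cast
  field_simp
  ring

lemma deriv_gbHawkingMass_nonneg {n : ℕ} (hn : 2 ≤ n) (lam α : ℝ) {V kI kS : ℝ → ℝ}
    {μ J r : ℝ} (hV : DifferentiableAt ℝ V r) (hkS : DifferentiableAt ℝ kS r)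
    (hmu : 16 * π * μ =
      gbM n V kI kS r + (n : ℝ) * ((n : ℝ) - 1) * lam + α * gbMuAlpha n V kI kS r)
    (hJ : 8 * π * J = gbN1 n V kI kS r + 2 * α * gbJAlpha n V kI kS r)
    (hDEC : |J| ≤ μ) (hout : |kS r| < sphMeanCurv n V r) :
    0 ≤ deriv (gbHawkingMass n lam (((n : ℝ) - 2) * ((n : ℝ) - 3) * α) V kS) r := by
  obtain ⟨hr, hVr⟩ := pos_of_sphMeanCurv_pos (by omega) ((abs_nonneg _).trans_lt hout)
  have hn1 : (0 : ℝ) < (n : ℝ) - 1 := by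
    have : (2 : ℝ) ≤ n := by exact_mod_cast hn
    linarith
  have hflux : 0 ≤ μ - kS r / sphMeanCurv n V r * J :=
    sub_nonneg.mpr (div_mul_le_of_abs_le hout.le hDEC)
  rw [deriv_gbHawkingMass hn lam α hr.ne' hVr hV hkS, ← hmu, ← hJ]
  calc (0 : ℝ) ≤ r ^ (n - 1) / (2 * ((n : ℝ) - 1)) *
        (16 * π * (μ - kS r / sphMeanCurv n V r * J)) := by positivity
    _ = _ := by ring

theorem gbHawkingMass_monotone_general (n : ℕ) (hn : 3 ≤ n) (lam α ta rp : ℝ)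
    (hta : ta = ((n : ℝ) - 2) * ((n : ℝ) - 3) * α)
    (V kI kS μ J : ℝ → ℝ)
    (hVd : ∀ r, rp < r → DifferentiableAt ℝ V r)
    (hkSd : ∀ r, rp < r → DifferentiableAt ℝ kS r)
    -- Gauss–Bonnet Hamiltonian constraint
    (hmu : ∀ r, rp < r → 16 * π * μ r =
      gbM n V kI kS r + (n : ℝ) * ((n : ℝ) - 1) * lam + α * gbMuAlpha n V kI kS r)
    -- Gauss–Bonnet momentum constraint
    (hJ : ∀ r, rp < r → 8 * π * J r = gbN1 n V kI kS r + 2 * α * gbJAlpha n V kI kS r)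
    -- dominant energy condition
    (hDEC : ∀ r, rp < r → |J r| ≤ μ r)
    -- outermost condition
    (hout : ∀ r, rp < r → |kS r| < sphMeanCurv n V r)
    -- continuity of `m_GB` at the horizon `r = rp`
    (hcont : ContinuousWithinAt (gbHawkingMass n lam ta V kS) (Set.Ici rp) rp) :
    ∀ r₁ r₂ : ℝ, rp ≤ r₁ → r₁ ≤ r₂ →
      gbHawkingMass n lam ta V kS r₁ ≤ gbHawkingMass n lam ta V kS r₂ := by
  subst hta
  intro r₁ r₂ h₁ h₁₂
  refine monotoneOn_Ici_of_deriv_nonneg hcont (fun r hr => ?_) (fun r hr => ?_)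
    h₁ (h₁.trans h₁₂) h₁₂
  · have hr0 : 0 < r :=
      (pos_of_sphMeanCurv_pos (by omega) ((abs_nonneg _).trans_lt (hout r hr))).1
    exact differentiableAt_gbHawkingMass n lam _ hr0.ne' (hVd r hr) (hkSd r hr)
  · exact deriv_gbHawkingMass_nonneg (by omega) lam α (hVd r hr) (hkSd r hr)
      (hmu r hr) (hJ r hr) (hDEC r hr) (hout r hr)

/-- Monotonicity of the generalized Gauss–Bonnet Hawking mass (Proposition 3.2): under the
radial Gauss–Bonnet constraints, the dominant energy condition `μ̃ ≥ |J̃_ν|` and the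
outermost condition `H > |k_S|`, the mass `m_GB` is non-decreasing on `[r₊, ∞)`. -/
theorem gbHawkingMass_monotone (n : ℕ) (hn : 3 ≤ n) (lam α ta rp : ℝ) (hlam : 0 ≤ lam)
    (hα : 0 < α) (hta : ta = ((n : ℝ) - 2) * ((n : ℝ) - 3) * α) (hrp : 0 < rp)
    (V kI kS μ J : ℝ → ℝ)
    (hVpos : ∀ r, rp < r → 0 < V r)
    (hVd : ∀ r, rp < r → DifferentiableAt ℝ V r)
    (hkSd : ∀ r, rp < r → DifferentiableAt ℝ kS r)
    (hmHd : ∀ r, rp < r → DifferentiableAt ℝ (hawkingMass n V kS) r)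
    -- Gauss–Bonnet Hamiltonian constraint
    (hmu : ∀ r, rp < r → 16 * π * μ r =
      gbM n V kI kS r + (n : ℝ) * ((n : ℝ) - 1) * lam + α * gbMuAlpha n V kI kS r)
    -- Gauss–Bonnet momentum constraint
    (hJ : ∀ r, rp < r → 8 * π * J r = gbN1 n V kI kS r + 2 * α * gbJAlpha n V kI kS r)
    -- dominant energy condition
    (hDEC : ∀ r, rp < r → |J r| ≤ μ r)
    -- outermost condition
    (hout : ∀ r, rp < r → |kS r| < sphMeanCurv n V r)
    -- continuity of `m_GB` at the horizon `r = rp`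
    (hcont : ContinuousWithinAt (gbHawkingMass n lam ta V kS) (Set.Ici rp) rp) :
    ∀ r₁ r₂ : ℝ, rp ≤ r₁ → r₁ ≤ r₂ →
      gbHawkingMass n lam ta V kS r₁ ≤ gbHawkingMass n lam ta V kS r₂ :=
  gbHawkingMass_monotone_general n hn lam α ta rp hta V kI kS μ J hVd hkSd hmu hJ hDEC hout hcont
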